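/- arXiv:2005.00838 — 2 statements merged into one kernel-verified Lean document; each statement's English description precedes it below -/
import Mathlib

section
/- (Implicit Duality Theorem) Let F be a field, let S, P, Q be pairwise disjoint finite sets, and let V_SP ⊆ F_{S∪P} and V_PQ ⊆ F_{P∪Q} be subspaces. Then (V_SP ↔ V_PQ)^⊥ = V_SP^⊥ ⇌ V_PQ^⊥, where the orthogonal complement on the left is taken in F_{S∪Q}. In particular, for Q = ∅ and a subspace V_P ⊆ F_P one has (V_SP ↔ V_P)^⊥ = V_SP^⊥ ↔ V_P^⊥. -/
noncomputable section

open scoped BigOperators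

/-- Dot product of two vectors indexed by a finite type. -/
def dotProd {F X : Type*} [Field F] [Fintype X] (f g : X → F) : F :=
  ∑ x, f x * g x

/-- Orthogonal complement of a collection of vectors on a single finite index set. -/
def perp1 {F X : Type*} [Field F] [Fintype X] (K : Set (X → F)) : Set (X → F) :=
  {g | ∀ f ∈ K, dotProd f g = 0}

/-- Orthogonal complement of a collection of vectors on a union of two disjoint
finite index sets (encoded as pairs). -/
def perp2 {F A B : Type*} [Field F] [Fintype A] [Fintype B]
    (K : Set ((A → F) × (B → F))) : Set ((A → F) × (B → F)) :=
  {y | ∀ x ∈ K, dotProd x.1 y.1 + dotProd x.2 y.2 = 0}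

/-- Matched composition over the shared (middle) index set. -/
def matchedComp {A C B : Type*} (K₁ : Set (A × C)) (K₂ : Set (C × B)) : Set (A × B) :=
  {x | ∃ c, (x.1, c) ∈ K₁ ∧ (c, x.2) ∈ K₂}

/-- Skewed composition over the shared (middle) index set. -/
def skewedComp {A C B : Type*} [Neg C] (K₁ : Set (A × C)) (K₂ : Set (C × B)) : Set (A × B) :=
  {x | ∃ c, (x.1, c) ∈ K₁ ∧ (-c, x.2) ∈ K₂}

/-- Matched composition with a collection on the shared index set only
(the case `Q = ∅`). -/
def matchedComp1 {A C : Type*} (K₁ : Set (A × C)) (K₂ : Set C) : Set A :=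
  {a | ∃ c, (a, c) ∈ K₁ ∧ c ∈ K₂}

/-!
`V_SP ↔ V_PQ` is the image, under the projection forgetting `P`, of
`W = (V_SP × F_Q) ∩ (F_S × V_PQ)` in `F_{S∪Q∪P}`, so `(f, h)` is orthogonal to it exactly when
`(f, h, 0) ∈ W^⊥`. For a nondegenerate symmetric form on a finite-dimensional space the
orthogonal of an intersection is the sum of the orthogonals (take orthogonals in
`(A^⊥ + B^⊥)^⊥ = A ∩ B`). The vectors of `(V_SP × F_Q)^⊥` have the form `(f, 0, g)` with
`(f, g) ∈ V_SP^⊥`, those of `(F_S × V_PQ)^⊥` the form `(0, h, g')` with `(g', h) ∈ V_PQ^⊥`, and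
writing `(f, h, 0)` as such a sum forces `g' = -g`. The case `Q = ∅` is the zero space in place
of `F_Q`.
-/

open LinearMap (BilinForm)

namespace LinearMap.BilinForm

variable {F M N : Type*} [Field F] [AddCommGroup M] [Module F M] [AddCommGroup N] [Module F N]

theorem orthogonal_sup (B : BilinForm F M) (U V : Submodule F M) :
    B.orthogonal (U ⊔ V) = B.orthogonal U ⊓ B.orthogonal V := by
  ext y
  simp only [Submodule.mem_inf, mem_orthogonal_iff]
  refine ⟨fun h => ⟨fun x hx => h x (Submodule.mem_sup_left hx),
    fun x hx => h x (Submodule.mem_sup_right hx)⟩, ?_⟩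
  rintro ⟨hU, hV⟩ x hx
  obtain ⟨u, hu, v, hv, rfl⟩ := Submodule.mem_sup.mp hx
  rw [map_add, LinearMap.add_apply, hU u hu, hV v hv, add_zero]

theorem orthogonal_inf [FiniteDimensional F M] {B : BilinForm F M} (hB : B.Nondegenerate)
    (hB' : B.IsRefl) (U V : Submodule F M) :
    B.orthogonal (U ⊓ V) = B.orthogonal U ⊔ B.orthogonal V := by
  rw [← orthogonal_orthogonal hB hB' (B.orthogonal U ⊔ B.orthogonal V), orthogonal_sup,
    orthogonal_orthogonal hB hB', orthogonal_orthogonal hB hB']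

protected def prod (B₁ : BilinForm F M) (B₂ : BilinForm F N) : BilinForm F (M × N) :=
  B₁.compl₁₂ (fst F M N) (fst F M N) + B₂.compl₁₂ (snd F M N) (snd F M N)

variable {B₁ : BilinForm F M} {B₂ : BilinForm F N}

@[simp]
theorem prod_apply (x y : M × N) : B₁.prod B₂ x y = B₁ x.1 y.1 + B₂ x.2 y.2 := rfl

theorem IsSymm.prod (h₁ : B₁.IsSymm) (h₂ : B₂.IsSymm) : (B₁.prod B₂).IsSymm :=
  ⟨fun x y => by rw [prod_apply, prod_apply, h₁.eq, h₂.eq]⟩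

theorem Nondegenerate.prod (h₁ : B₁.Nondegenerate) (h₂ : B₂.Nondegenerate) :
    (B₁.prod B₂).Nondegenerate := by
  refine ⟨fun x hx => Prod.ext ?_ ?_, fun y hy => Prod.ext ?_ ?_⟩
  · exact h₁.1 x.1 fun y => by simpa using hx (y, 0)
  · exact h₂.1 x.2 fun y => by simpa using hx (0, y)
  · exact h₁.2 y.1 fun x => by simpa using hy (x, 0)
  · exact h₂.2 y.2 fun x => by simpa using hy (0, x)

end LinearMap.BilinForm

theorem isSymm_dotProductBilin (F X : Type*) [Field F] [Fintype X] :
    BilinForm.IsSymm (dotProductBilin F F : BilinForm F (X → F)) :=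
  ⟨dotProduct_comm⟩

theorem nondegenerate_dotProductBilin (F X : Type*) [Field F] [Fintype X] :
    (dotProductBilin F F : BilinForm F (X → F)).Nondegenerate :=
  ⟨fun _ hx => dotProduct_eq_zero_iff.mp hx,
    fun _ hy => dotProduct_eq_zero_iff.mp fun x => (dotProduct_comm _ _).trans (hy x)⟩

section ImplicitDuality

open LinearMap LinearMap.BilinForm

variable {F M₁ M₂ M₃ : Type*} [Field F] [AddCommGroup M₁] [Module F M₁]
  [AddCommGroup M₂] [Module F M₂] [AddCommGroup M₃] [Module F M₃]
  {B₁ : BilinForm F M₁} {B₂ : BilinForm F M₂} {B₃ : BilinForm F M₃}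

theorem of_mem_orthogonal_comap_fst_prodMap (hB₃ : B₃.Nondegenerate) {U : Submodule F (M₁ × M₂)}
    {y : (M₁ × M₃) × M₂}
    (hy : y ∈ ((B₁.prod B₃).prod B₂).orthogonal (U.comap ((fst F M₁ M₃).prodMap id))) :
    y.1.2 = 0 ∧ (y.1.1, y.2) ∈ (B₁.prod B₂).orthogonal U := by
  rw [mem_orthogonal_iff] at hy
  refine ⟨hB₃.2 _ fun b => by simpa using hy ((0, b), 0) U.zero_mem, fun x hx => ?_⟩
  simpa using hy ((x.1, 0), x.2) (by simpa using hx)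

theorem of_mem_orthogonal_comap_snd_prod (hB₁ : B₁.Nondegenerate) {V : Submodule F (M₂ × M₃)}
    {z : (M₁ × M₃) × M₂}
    (hz : z ∈ ((B₁.prod B₃).prod B₂).orthogonal
      (V.comap ((snd F (M₁ × M₃) M₂).prod (snd F M₁ M₃ ∘ₗ fst F (M₁ × M₃) M₂)))) :
    z.1.1 = 0 ∧ (z.2, z.1.2) ∈ (B₂.prod B₃).orthogonal V := by
  rw [mem_orthogonal_iff] at hz
  refine ⟨hB₁.2 _ fun a => by simpa using hz ((a, 0), 0) V.zero_mem, fun x hx => ?_⟩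
  simpa [add_comm] using hz ((0, x.2), x.1) (by simpa using hx)

variable [FiniteDimensional F M₁] [FiniteDimensional F M₂] [FiniteDimensional F M₃]

theorem orthogonal_matchedComp (hB₁ : B₁.Nondegenerate) (hB₂ : B₂.Nondegenerate)
    (hB₃ : B₃.Nondegenerate) (hS₁ : B₁.IsSymm) (hS₂ : B₂.IsSymm) (hS₃ : B₃.IsSymm)
    (U : Submodule F (M₁ × M₂)) (V : Submodule F (M₂ × M₃)) :
    {y | ∀ x ∈ matchedComp (U : Set (M₁ × M₂)) V, B₁.prod B₃ x y = 0} =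
      skewedComp ((B₁.prod B₂).orthogonal U : Set (M₁ × M₂)) ((B₂.prod B₃).orthogonal V) := by
  ext ⟨f, h⟩
  constructor
  · intro hfh
    let T := (B₁.prod B₃).prod B₂
    have hT : T.Nondegenerate := (hB₁.prod hB₃).prod hB₂
    have hTsymm : T.IsSymm := (hS₁.prod hS₃).prod hS₂
    let W₁ := U.comap ((fst F M₁ M₃).prodMap id)
    let W₂ := V.comap ((snd F (M₁ × M₃) M₂).prod (snd F M₁ M₃ ∘ₗ fst F (M₁ × M₃) M₂))
    have hmem : ((f, h), 0) ∈ T.orthogonal (W₁ ⊓ W₂) := by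
      rintro ⟨⟨a, b⟩, g⟩ ⟨hU, hV⟩
      simpa [T] using hfh (a, b) ⟨g, hU, hV⟩
    rw [orthogonal_inf hT hTsymm.isRefl] at hmem
    obtain ⟨y, hy, z, hz, hyz⟩ := Submodule.mem_sup.mp hmem
    obtain ⟨hy₀, hyU⟩ := of_mem_orthogonal_comap_fst_prodMap hB₃ hy
    obtain ⟨hz₀, hzV⟩ := of_mem_orthogonal_comap_snd_prod hB₁ hz
    simp only [Prod.ext_iff, Prod.fst_add, Prod.snd_add, hy₀, hz₀, add_zero, zero_add] at hyz
    obtain ⟨⟨rfl, rfl⟩, hyz⟩ := hyz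
    rw [add_eq_zero_iff_eq_neg'] at hyz
    exact ⟨y.2, hyU, hyz ▸ hzV⟩
  · rintro ⟨c, hfc, hch⟩ x ⟨g, hU, hV⟩
    have h₁ := hfc _ hU
    have h₂ := hch _ hV
    simp only [BilinForm.prod_apply, map_neg] at h₁ h₂ ⊢
    linear_combination h₁ + h₂

theorem orthogonal_matchedComp1 (hB₁ : B₁.Nondegenerate) (hB₂ : B₂.Nondegenerate)
    (hS₁ : B₁.IsSymm) (hS₂ : B₂.IsSymm) (U : Submodule F (M₁ × M₂)) (W : Submodule F M₂) :
    {f | ∀ a ∈ matchedComp1 (U : Set (M₁ × M₂)) W, B₁ a f = 0} =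
      matchedComp1 ((B₁.prod B₂).orthogonal U : Set (M₁ × M₂)) (B₂.orthogonal W) := by
  have key := orthogonal_matchedComp hB₁ hB₂ (B₃ := (0 : BilinForm F PUnit))
    ⟨fun _ _ => Subsingleton.elim _ _, fun _ _ => Subsingleton.elim _ _⟩ hS₁ hS₂ ⟨fun _ _ => rfl⟩
    U (W.prod ⊤)
  ext f
  simpa [matchedComp, matchedComp1, skewedComp, mem_orthogonal_iff] using
    Set.ext_iff.mp key (f, 0)

end ImplicitDuality

/-- Implicit Duality Theorem: `(V_SP ↔ V_PQ)^⊥ = V_SP^⊥ ⇌ V_PQ^⊥`; in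
particular (for `Q = ∅`) `(V_SP ↔ V_P)^⊥ = V_SP^⊥ ↔ V_P^⊥`. -/
theorem stmt7 (F S P Q : Type*) [Field F] [Fintype S] [Fintype P] [Fintype Q]
    (VSP : Submodule F ((S → F) × (P → F))) (VPQ : Submodule F ((P → F) × (Q → F)))
    (VP : Submodule F (P → F)) :
    perp2 (matchedComp (VSP : Set ((S → F) × (P → F))) (VPQ : Set ((P → F) × (Q → F))))
        = skewedComp (perp2 (VSP : Set ((S → F) × (P → F))))
            (perp2 (VPQ : Set ((P → F) × (Q → F))))
    ∧ perp1 (matchedComp1 (VSP : Set ((S → F) × (P → F))) (VP : Set (P → F)))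
        = matchedComp1 (perp2 (VSP : Set ((S → F) × (P → F)))) (perp1 (VP : Set (P → F))) :=
  ⟨orthogonal_matchedComp (nondegenerate_dotProductBilin F S) (nondegenerate_dotProductBilin F P)
      (nondegenerate_dotProductBilin F Q) (isSymm_dotProductBilin F S)
      (isSymm_dotProductBilin F P) (isSymm_dotProductBilin F Q) VSP VPQ,
    orthogonal_matchedComp1 (nondegenerate_dotProductBilin F S) (nondegenerate_dotProductBilin F P)
      (isSymm_dotProductBilin F S) (isSymm_dotProductBilin F P) VSP VP⟩
end
end

section
/- Let F be a field and let S, P be disjoint finite sets with pairwise disjoint copies S′, S″, P′, P″. Let V₁, V̂₁ ⊆ F_{S′∪P′∪S″∪P″} be adjoints of each other with respect to the copies S′∪P′ and S″∪P″, and let V₂, V̂₂ ⊆ F_{S′∪S″} be adjoints of each other with respect to the copies S′ and S″. Then the matched compositions V₁ ↔ V₂ and V̂₁ ↔ V̂₂ (over the shared index set S′∪S″, subspaces of F_{P′∪P″}) are adjoints of each other with respect to the copies P′ and P″. In particular, if V₁ and V₂ are reciprocal (self-adjoint), then so is V₁ ↔ V₂. -/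
noncomputable section

open scoped BigOperators

/-- Dot product on `F_{S∪P}` (encoded as pairs). -/
def dotM {F S P : Type*} [Field F] [Fintype S] [Fintype P]
    (x y : (S → F) × (P → F)) : F :=
  dotProd x.1 y.1 + dotProd x.2 y.2

/-- Orthogonal complement of a collection on `X′∪X″` (two copies of `X`). -/
def perpFun2 {F X : Type*} [Field F] [Fintype X]
    (K : Set ((X → F) × (X → F))) : Set ((X → F) × (X → F)) :=
  {y | ∀ x ∈ K, dotProd x.1 y.1 + dotProd x.2 y.2 = 0}

/-- Adjoint of a collection on `X′∪X″`: `{(a,b) : (b,−a) ∈ V^⊥}`. -/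
def adjFun {F X : Type*} [Field F] [Fintype X]
    (V : Set ((X → F) × (X → F))) : Set ((X → F) × (X → F)) :=
  {z | (z.2, -z.1) ∈ perpFun2 V}

/-- Orthogonal complement of a collection on `(S′∪P′)∪(S″∪P″)`. -/
def perpM2 {F S P : Type*} [Field F] [Fintype S] [Fintype P]
    (K : Set (((S → F) × (P → F)) × ((S → F) × (P → F)))) :
    Set (((S → F) × (P → F)) × ((S → F) × (P → F))) :=
  {y | ∀ x ∈ K, dotM x.1 y.1 + dotM x.2 y.2 = 0}

/-- Adjoint of a collection on `(S′∪P′)∪(S″∪P″)` w.r.t. the copies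
`S′∪P′` and `S″∪P″`. -/
def adjM {F S P : Type*} [Field F] [Fintype S] [Fintype P]
    (V : Set (((S → F) × (P → F)) × ((S → F) × (P → F)))) :
    Set (((S → F) × (P → F)) × ((S → F) × (P → F))) :=
  {z | (z.2, -z.1) ∈ perpM2 V}

/-- Matched composition of `V₁ ⊆ F_{S′∪P′∪S″∪P″}` with `V₂ ⊆ F_{S′∪S″}`
over the shared index set `S′∪S″`; a subset of `F_{P′∪P″}`. -/
def portComp {F S P : Type*} [Field F]
    (V₁ : Set (((S → F) × (P → F)) × ((S → F) × (P → F))))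
    (V₂ : Set ((S → F) × (S → F))) : Set ((P → F) × (P → F)) :=
  {z | ∃ f₁ f₂ : S → F, ((f₁, z.1), (f₂, z.2)) ∈ V₁ ∧ (f₁, f₂) ∈ V₂}

/-!
Writing `ω((a, b), (c, d)) = ⟨a, d⟩ - ⟨b, c⟩`, the adjoint of `V` is its `ω`-orthogonal
complement, and on `F_{S′∪P′∪S″∪P″}` the form splits as an `S`-part plus a `P`-part.
For `V̂₁ ↔ V̂₂ ⊆ (V₁ ↔ V₂)^adj` the `S`-parts of the two pairings cancel. Conversely, if `z` is
`ω`-orthogonal to `V₁ ↔ V₂`, then `(v, w) ↦ ω(v_P, z)` is a functional on `V₁ × V₂` vanishing on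
the kernel of `(v, w) ↦ v_S - w`, so it factors through this map; representing the factor
through `ω` by some `g` gives the witness `(g, z) ∈ V̂₁` with `g ∈ V̂₂`.
-/

open Matrix LinearMap

section SymplecticForm

variable {F X : Type*} [Field F] [Fintype X]

lemma dotProd_eq_dotProduct (f g : X → F) : dotProd f g = f ⬝ᵥ g := rfl

def sympForm : LinearMap.BilinForm F ((X → F) × (X → F)) :=
  LinearMap.mk₂ F (fun x z => dotProd x.1 z.2 - dotProd x.2 z.1)
    (fun _ _ _ => by
      simp only [dotProd_eq_dotProduct, Prod.fst_add, Prod.snd_add, add_dotProduct]; ring)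
    (fun _ _ _ => by
      simp only [dotProd_eq_dotProduct, Prod.smul_fst, Prod.smul_snd, smul_dotProduct, smul_eq_mul]
      ring)
    (fun _ _ _ => by
      simp only [dotProd_eq_dotProduct, Prod.fst_add, Prod.snd_add, dotProduct_add]; ring)
    (fun _ _ _ => by
      simp only [dotProd_eq_dotProduct, Prod.smul_fst, Prod.smul_snd, dotProduct_smul, smul_eq_mul]
      ring)

lemma sympForm_apply (x z : (X → F) × (X → F)) :
    sympForm x z = dotProd x.1 z.2 - dotProd x.2 z.1 := rfl

lemma mem_adjFun_iff {V : Set ((X → F) × (X → F))} {z : (X → F) × (X → F)} :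
    z ∈ adjFun V ↔ ∀ x ∈ V, sympForm x z = 0 := by
  simp only [adjFun, perpFun2, Set.mem_ofPred_eq, sympForm_apply, dotProd_eq_dotProduct,
    dotProduct_neg, ← sub_eq_add_neg]

lemma exists_sympForm_flip_eq (μ : Module.Dual F ((X → F) × (X → F))) :
    ∃ g, sympForm.flip g = μ := by
  classical
  refine ⟨(-(dotProductEquiv F X).symm (μ ∘ₗ inr F _ _),
    (dotProductEquiv F X).symm (μ ∘ₗ inl F _ _)), prod_ext ?_ ?_⟩ <;>
  ext x <;> simp [sympForm_apply, dotProd_eq_dotProduct]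

end SymplecticForm

section MatchedComposition

variable {F S P : Type*} [Field F]

local notation "𝔼" => ((S → F) × (P → F)) × ((S → F) × (P → F))

def portS : 𝔼 →ₗ[F] (S → F) × (S → F) :=
  (fst F _ _).prodMap (fst F _ _)

def portP : 𝔼 →ₗ[F] (P → F) × (P → F) :=
  (snd F _ _).prodMap (snd F _ _)

@[simp] lemma portS_apply (x : 𝔼) : portS x = (x.1.1, x.2.1) := rfl

@[simp] lemma portP_apply (x : 𝔼) : portP x = (x.1.2, x.2.2) := rfl

variable [Fintype S] [Fintype P]

lemma mem_adjM_iff {V : Set 𝔼} {z : 𝔼} :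
    z ∈ adjM V ↔ ∀ x ∈ V, sympForm (portS x) (portS z) + sympForm (portP x) (portP z) = 0 := by
  simp only [adjM, perpM2, dotM, Set.mem_ofPred_eq, sympForm_apply, dotProd_eq_dotProduct,
    portS, portP, prodMap_apply, fst_apply, snd_apply, Prod.fst_neg, Prod.snd_neg, dotProduct_neg]
  exact forall₂_congr fun _ _ => Iff.of_eq (congrArg (· = 0) (by ring))

lemma portComp_adjM_adjFun_subset (V₁ : Set 𝔼) (V₂ : Set ((S → F) × (S → F))) :
    portComp (adjM V₁) (adjFun V₂) ⊆ adjFun (portComp V₁ V₂) := by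
  rintro z ⟨g₁, g₂, hg₁, hg₂⟩
  rw [mem_adjFun_iff]
  rintro p ⟨f₁, f₂, hf₁, hf₂⟩
  have h₁ : sympForm (f₁, f₂) (g₁, g₂) + sympForm p z = 0 := mem_adjM_iff.1 hg₁ _ hf₁
  have h₂ : sympForm (f₁, f₂) (g₁, g₂) = 0 := mem_adjFun_iff.1 hg₂ _ hf₂
  rwa [h₂, zero_add] at h₁

lemma adjFun_portComp_subset (V₁ : Submodule F 𝔼) (V₂ : Submodule F ((S → F) × (S → F))) :
    adjFun (portComp (V₁ : Set 𝔼) (V₂ : Set ((S → F) × (S → F))))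
      ⊆ portComp (adjM (V₁ : Set 𝔼)) (adjFun (V₂ : Set ((S → F) × (S → F)))) := by
  intro z hz
  rw [mem_adjFun_iff] at hz
  let φ : V₁ × V₂ →ₗ[F] (S → F) × (S → F) := (portS ∘ₗ V₁.subtype).coprod (-V₂.subtype)
  let ℓ : Module.Dual F (V₁ × V₂) := (sympForm.flip z ∘ₗ portP ∘ₗ V₁.subtype).coprod 0
  have hℓ : ℓ ∈ (ker φ).dualAnnihilator := by
    rw [Submodule.mem_dualAnnihilator]
    rintro ⟨⟨x, hx⟩, ⟨w, hw⟩⟩ hxw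
    have hxw : (x.1.1, x.2.1) = w := by
      simpa [φ, ← sub_eq_add_neg, sub_eq_zero] using hxw
    simpa [ℓ] using hz (portP x) ⟨x.1.1, x.2.1, hx, hxw ▸ hw⟩
  rw [← range_dualMap_eq_dualAnnihilator_ker] at hℓ
  obtain ⟨μ, hμ⟩ := hℓ
  obtain ⟨g, hg⟩ := exists_sympForm_flip_eq (-μ)
  refine ⟨g.1, g.2, mem_adjM_iff.2 fun x hx => ?_, mem_adjFun_iff.2 fun w hw => ?_⟩
  · have hμx : μ (portS x) = sympForm (portP x) z := by
      simpa [φ, ℓ] using congr($hμ (⟨x, hx⟩, 0))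
    have hgx : sympForm (portS x) g = -μ (portS x) := by simpa using congr($hg (portS x))
    show sympForm (portS x) g + sympForm (portP x) z = 0
    rw [hgx, hμx]
    ring
  · have hμw : μ w = 0 := by simpa [φ, ℓ, Prod.mk_zero_zero] using congr($hμ (0, ⟨w, hw⟩))
    have hgw : sympForm w g = -μ w := by simpa using congr($hg w)
    rw [hgw, hμw, neg_zero]

lemma portComp_adjM_adjFun (V₁ : Submodule F 𝔼) (V₂ : Submodule F ((S → F) × (S → F))) :
    portComp (adjM (V₁ : Set 𝔼)) (adjFun (V₂ : Set ((S → F) × (S → F))))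
      = adjFun (portComp (V₁ : Set 𝔼) (V₂ : Set ((S → F) × (S → F)))) :=
  (portComp_adjM_adjFun_subset _ _).antisymm (adjFun_portComp_subset V₁ V₂)

end MatchedComposition

/-- Adjoints compose: if `V₁,V̂₁` are adjoints of each other and so are
`V₂,V̂₂`, then `V₁ ↔ V₂` and `V̂₁ ↔ V̂₂` are adjoints of each other; in
particular matched composition preserves reciprocity (self-adjointness). -/
theorem stmt9 (F S P : Type*) [Field F] [Fintype S] [Fintype P] :
    (∀ (V₁ W₁ : Submodule F (((S → F) × (P → F)) × ((S → F) × (P → F))))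
       (V₂ W₂ : Submodule F ((S → F) × (S → F))),
      ((W₁ : Set (((S → F) × (P → F)) × ((S → F) × (P → F))))
          = adjM (V₁ : Set (((S → F) × (P → F)) × ((S → F) × (P → F))))
        ∧ (V₁ : Set (((S → F) × (P → F)) × ((S → F) × (P → F))))
          = adjM (W₁ : Set (((S → F) × (P → F)) × ((S → F) × (P → F))))) →
      ((W₂ : Set ((S → F) × (S → F))) = adjFun (V₂ : Set ((S → F) × (S → F)))
        ∧ (V₂ : Set ((S → F) × (S → F))) = adjFun (W₂ : Set ((S → F) × (S → F)))) →
      (portComp (W₁ : Set (((S → F) × (P → F)) × ((S → F) × (P → F))))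
            (W₂ : Set ((S → F) × (S → F)))
          = adjFun (portComp (V₁ : Set (((S → F) × (P → F)) × ((S → F) × (P → F))))
              (V₂ : Set ((S → F) × (S → F))))
        ∧ portComp (V₁ : Set (((S → F) × (P → F)) × ((S → F) × (P → F))))
            (V₂ : Set ((S → F) × (S → F)))
          = adjFun (portComp (W₁ : Set (((S → F) × (P → F)) × ((S → F) × (P → F))))
              (W₂ : Set ((S → F) × (S → F))))))
    ∧ (∀ (V₁ : Submodule F (((S → F) × (P → F)) × ((S → F) × (P → F))))
         (V₂ : Submodule F ((S → F) × (S → F))),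
      adjM (V₁ : Set (((S → F) × (P → F)) × ((S → F) × (P → F))))
          = (V₁ : Set (((S → F) × (P → F)) × ((S → F) × (P → F)))) →
      adjFun (V₂ : Set ((S → F) × (S → F))) = (V₂ : Set ((S → F) × (S → F))) →
      adjFun (portComp (V₁ : Set (((S → F) × (P → F)) × ((S → F) × (P → F))))
            (V₂ : Set ((S → F) × (S → F))))
        = portComp (V₁ : Set (((S → F) × (P → F)) × ((S → F) × (P → F))))
            (V₂ : Set ((S → F) × (S → F)))) := by
  refine ⟨fun V₁ W₁ V₂ W₂ ⟨hW₁, hV₁⟩ ⟨hW₂, hV₂⟩ => ⟨?_, ?_⟩, fun V₁ V₂ hV₁ hV₂ => ?_⟩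
  · rw [hW₁, hW₂]
    exact portComp_adjM_adjFun V₁ V₂
  · rw [hV₁, hV₂]
    exact portComp_adjM_adjFun W₁ W₂
  · rw [← portComp_adjM_adjFun, hV₁, hV₂]
end
end
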